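/- Let H be a nonempty set of measurable NE approximators, D a probability measure on U, m ≥ 1, and ε ∈ (0,1). Suppose C is a nonempty finite set of measurable NE approximators of cardinality K that (ε/6)-covers H, and assume the set {S ∈ U^m : ∃h ∈ H, |L_S(h) − L_D(h)| > ε} is measurable with respect to the product measure D^m. Then P_{S∼D^m}[ ∃h ∈ H, |L_S(h) − L_D(h)| > ε ] ≤ 2·K·exp(−2·m·ε²/9). -/

import Mathlib

open Finset MeasureTheory

section NashDefs

variable {N : Type*} {A : N → Type*}

/-- `σ` is a mixed strategy profile: each `σ i` is a probability distribution on `A i`. -/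
def IsMixedProfile [∀ i, Fintype (A i)] (σ : ∀ i, A i → ℝ) : Prop :=
  (∀ i a, 0 ≤ σ i a) ∧ ∀ i, ∑ a, σ i a = 1

/-- Expected utility of player `i` when the mixed strategy profile `σ` is played:
`u_i(σ) = ∑_{a ∈ A} (∏_j σ_j(a_j)) u_i(a)`. -/
def expUtil [Fintype N] [DecidableEq N] [∀ i, Fintype (A i)]
    (u : N → (∀ j, A j) → ℝ) (i : N) (σ : ∀ j, A j → ℝ) : ℝ :=
  ∑ a : ∀ j, A j, (∏ j, σ j (a j)) * u i a

/-- The pure strategy of player `i` playing action `b` with probability one. -/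
def pureStrat [∀ i, DecidableEq (A i)] {i : N} (b : A i) : A i → ℝ :=
  fun c => if c = b then 1 else 0

/-- Nash approximation loss:
`NashApr(σ, u) = max_{i ∈ N} max_{b ∈ A_i} [u_i(b, σ_{-i}) - u_i(σ)]`. -/
noncomputable def nashApr [Fintype N] [DecidableEq N] [Nonempty N]
    [∀ i, Fintype (A i)] [∀ i, DecidableEq (A i)] [∀ i, Nonempty (A i)]
    (σ : ∀ i, A i → ℝ) (u : N → (∀ j, A j) → ℝ) : ℝ :=
  Finset.univ.sup' Finset.univ_nonempty fun i : N =>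
    Finset.univ.sup' Finset.univ_nonempty fun b : A i =>
      expUtil u i (Function.update σ i (pureStrat b)) - expUtil u i σ

/-- ℓ1-distance between mixed strategy profiles:
`‖σ - σ'‖₁ = ∑_{i ∈ N} ∑_{a_i ∈ A_i} |σ_i(a_i) - σ'_i(a_i)|`. -/
def dist1 [Fintype N] [∀ i, Fintype (A i)] (σ σ' : ∀ i, A i → ℝ) : ℝ :=
  ∑ i, ∑ a, |σ i a - σ' i a|

/-- ℓmax-distance between game utilities:
`‖u - v‖max = max_{i ∈ N} max_{a ∈ A} |u_i(a) - v_i(a)|`. -/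
noncomputable def distMax [Fintype N] [DecidableEq N] [Nonempty N]
    [∀ i, Fintype (A i)] [∀ i, Nonempty (A i)]
    (u v : N → (∀ j, A j) → ℝ) : ℝ :=
  Finset.univ.sup' Finset.univ_nonempty fun i : N =>
    Finset.univ.sup' Finset.univ_nonempty fun a : ∀ j, A j => |u i a - v i a|

end NashDefs

/-- The set of all game utilities (with values in `[0,1]`) for fixed players `N`
and action space `A`, as a subtype. -/
abbrev GameUtil (N : Type*) (A : N → Type*) : Type _ :=
  {u : N → (∀ j, A j) → ℝ // ∀ i a, u i a ∈ Set.Icc (0 : ℝ) 1}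

/-- An NE approximator maps game utilities to mixed strategy profiles. -/
abbrev NEApprox (N : Type*) (A : N → Type*) [∀ i, Fintype (A i)] : Type _ :=
  {h : GameUtil N A → ∀ i, A i → ℝ // ∀ u, IsMixedProfile (h u)}

section Risk

variable {N : Type*} {A : N → Type*} [Fintype N] [DecidableEq N] [Nonempty N]
  [∀ i, Fintype (A i)] [∀ i, DecidableEq (A i)] [∀ i, Nonempty (A i)]

/-- Nash approximation loss of an NE approximator on a game. -/
noncomputable def nashLoss (h : NEApprox N A) (u : GameUtil N A) : ℝ :=
  nashApr (h.1 u) u.1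

/-- True risk `L_D(h) = E_{u ∼ D}[NashApr(h(u), u)]`. -/
noncomputable def trueRisk (D : Measure (GameUtil N A)) (h : NEApprox N A) : ℝ :=
  ∫ u, nashLoss h u ∂D

/-- Empirical risk `L_S(h) = (1/m) ∑_j NashApr(h(u⁽ʲ⁾), u⁽ʲ⁾)`. -/
noncomputable def empRisk {m : ℕ} (S : Fin m → GameUtil N A) (h : NEApprox N A) : ℝ :=
  (1 / (m : ℝ)) * ∑ j, nashLoss h (S j)

/-- `C` `r`-covers `H` under the `ℓ_{∞,1}`-distance:
every `h ∈ H` is within `ℓ_{∞,1}`-distance `r` of some `g ∈ C`. -/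
def Covers (r : ℝ) (C : Finset (NEApprox N A)) (H : Set (NEApprox N A)) : Prop :=
  ∀ h ∈ H, ∃ g ∈ C, ∀ u, dist1 (h.1 u) (g.1 u) ≤ r

end Risk

/-!
Each single approximator `g` has an empirical risk that is the mean of `m` i.i.d. losses with
values in `[0,1]`, so Hoeffding's inequality bounds the probability of a deviation `ε / 3` by
`2 exp (-2 m ε² / 9)`. Expected utilities are multilinear in the strategy profile with values in
`[0,1]`, which makes the Nash approximation loss `2`-Lipschitz for the `ℓ1` distance; hence an
`(ε / 6)`-close `g ∈ C` has both risks within `ε / 3` of those of `h`, and a deviation `> ε` of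
some `h ∈ H` forces a deviation `≥ ε / 3` of some `g ∈ C`. A union bound over `C` concludes.
-/

open Function ProbabilityTheory

section Profiles

variable {N : Type*} {A : N → Type*} [∀ i, Fintype (A i)] {σ σ' : ∀ i, A i → ℝ}

theorem IsMixedProfile.update [DecidableEq N] (hσ : IsMixedProfile σ) {i : N} {p : A i → ℝ}
    (hp₀ : ∀ a, 0 ≤ p a) (hp₁ : ∑ a, p a = 1) :
    IsMixedProfile (Function.update σ i p) := by
  constructor
  · intro j
    rcases eq_or_ne j i with rfl | hj
    · simpa using hp₀
    · simpa [update_of_ne hj] using hσ.1 j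
  · intro j
    rcases eq_or_ne j i with rfl | hj
    · simpa using hp₁
    · simpa [update_of_ne hj] using hσ.2 j

theorem IsMixedProfile.update_pureStrat [DecidableEq N] [∀ i, DecidableEq (A i)]
    (hσ : IsMixedProfile σ) {i : N} (b : A i) :
    IsMixedProfile (Function.update σ i (pureStrat b)) :=
  hσ.update (fun a => by unfold pureStrat; split_ifs <;> norm_num) (by simp [pureStrat])

theorem IsMixedProfile.piecewise (hσ : IsMixedProfile σ) (hσ' : IsMixedProfile σ')
    (s : Finset N) [DecidablePred (· ∈ s)] : IsMixedProfile (s.piecewise σ σ') :=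
  ⟨fun j => by by_cases hj : j ∈ s <;> simp [hj, hσ.1 j, hσ'.1 j],
    fun j => by by_cases hj : j ∈ s <;> simp [hj, hσ.2 j, hσ'.2 j]⟩

variable [Fintype N]

theorem dist1_comm : dist1 σ σ' = dist1 σ' σ := by
  simp only [dist1, abs_sub_comm]

theorem dist1_update_le [DecidableEq N] {i : N} (p : A i → ℝ) :
    dist1 (update σ i p) (update σ' i p) ≤ dist1 σ σ' := by
  refine sum_le_sum fun j _ => ?_
  rcases eq_or_ne j i with rfl | hj
  · simpa using sum_nonneg fun a _ => abs_nonneg (σ j a - σ' j a)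
  · simp [update_of_ne hj]

end Profiles

section ExpectedUtility

variable {N : Type*} {A : N → Type*} [Fintype N] [DecidableEq N] [∀ i, Fintype (A i)]
  {u : N → (∀ j, A j) → ℝ} {σ σ' : ∀ i, A i → ℝ} {i : N}

theorem expUtil_mem_Icc (hu : ∀ i a, u i a ∈ Set.Icc (0 : ℝ) 1) (hσ : IsMixedProfile σ) :
    expUtil u i σ ∈ Set.Icc 0 1 := by
  have hw (a : ∀ j, A j) : 0 ≤ ∏ j, σ j (a j) := prod_nonneg fun j _ => hσ.1 j (a j)
  refine ⟨sum_nonneg fun a _ => mul_nonneg (hw a) (hu i a).1, ?_⟩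
  calc expUtil u i σ ≤ ∑ a : ∀ j, A j, ∏ j, σ j (a j) :=
        sum_le_sum fun a _ => mul_le_of_le_one_right (hw a) (hu i a).2
    _ = ∏ j, ∑ b, σ j b := (Fintype.prod_sum _).symm
    _ = 1 := prod_eq_one fun j _ => hσ.2 j

variable [∀ i, DecidableEq (A i)]

theorem expUtil_eq_sum_mul_expUtil_update_pureStrat (k : N) :
    expUtil u i σ = ∑ b, σ k b * expUtil u i (update σ k (pureStrat b)) := by
  have hprod (b : A k) (a : ∀ j, A j) :
      ∏ j, update σ k (pureStrat b) j (a j) =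
        pureStrat b (a k) * ∏ j ∈ univ \ {k}, σ j (a j) := by
    simp_rw [apply_update (fun j (τ : A j → ℝ) => τ (a j))]
    exact prod_update_of_mem (mem_univ k) _ _
  simp_rw [expUtil, hprod, mul_sum]
  rw [sum_comm]
  refine sum_congr rfl fun a _ => ?_
  rw [prod_eq_mul_prod_sdiff_singleton_of_mem (mem_univ k)]
  simp [pureStrat, mul_assoc]

theorem abs_expUtil_update_sub_le (hu : ∀ i a, u i a ∈ Set.Icc (0 : ℝ) 1)
    (hσ : IsMixedProfile σ) (k : N) (p q : A k → ℝ) :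
    |expUtil u i (update σ k p) - expUtil u i (update σ k q)| ≤ ∑ b, |p b - q b| := by
  rw [expUtil_eq_sum_mul_expUtil_update_pureStrat k,
    expUtil_eq_sum_mul_expUtil_update_pureStrat k]
  simp only [update_self, update_idem, ← sum_sub_distrib, ← sub_mul]
  refine (abs_sum_le_sum_abs _ _).trans (sum_le_sum fun b _ => ?_)
  have hE := expUtil_mem_Icc (i := i) hu (hσ.update_pureStrat b)
  rw [abs_mul]
  exact mul_le_of_le_one_right (abs_nonneg _) (abs_le.2 ⟨by linarith [hE.1], hE.2⟩)

/-- Hybrid argument: the strategies are switched from `σ'` to `σ` one player at a time. -/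
theorem abs_expUtil_sub_le_dist1 (hu : ∀ i a, u i a ∈ Set.Icc (0 : ℝ) 1)
    (hσ : IsMixedProfile σ) (hσ' : IsMixedProfile σ') :
    |expUtil u i σ - expUtil u i σ'| ≤ dist1 σ σ' := by
  have hybrid (s : Finset N) :
      |expUtil u i (s.piecewise σ σ') - expUtil u i σ'| ≤
        ∑ j ∈ s, ∑ b, |σ j b - σ' j b| := by
    induction s using Finset.induction_on with
    | empty => simp
    | insert k s hk ih =>
      set τ := s.piecewise σ σ'
      have hτk : update τ k (σ' k) = τ :=
        update_eq_self_iff.2 (piecewise_eq_of_notMem _ _ _ hk).symm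
      rw [piecewise_insert, sum_insert hk]
      calc |expUtil u i (update τ k (σ k)) - expUtil u i σ'|
          ≤ |expUtil u i (update τ k (σ k)) - expUtil u i (update τ k (σ' k))|
            + |expUtil u i τ - expUtil u i σ'| := by rw [hτk]; exact abs_sub_le _ _ _
        _ ≤ _ := add_le_add (abs_expUtil_update_sub_le hu (hσ.piecewise hσ' s) k _ _) ih
  simpa [dist1] using hybrid univ

end ExpectedUtility

section NashApproximation

variable {N : Type*} {A : N → Type*} [Fintype N] [DecidableEq N] [Nonempty N]
  [∀ i, Fintype (A i)] [∀ i, DecidableEq (A i)] [∀ i, Nonempty (A i)]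
  {u : N → (∀ j, A j) → ℝ} {σ σ' : ∀ i, A i → ℝ}

theorem sub_le_nashApr (i : N) (b : A i) :
    expUtil u i (update σ i (pureStrat b)) - expUtil u i σ ≤ nashApr σ u :=
  (le_sup' (fun b => expUtil u i (update σ i (pureStrat b)) - expUtil u i σ) (mem_univ b)).trans
    (le_sup' (fun i => univ.sup' univ_nonempty fun b : A i =>
      expUtil u i (update σ i (pureStrat b)) - expUtil u i σ) (mem_univ i))

/-- Some pure deviation does at least as well as the weighted average `σ i` of all of them. -/
theorem nashApr_nonneg (hσ : IsMixedProfile σ) : 0 ≤ nashApr σ u := by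
  obtain ⟨i⟩ := ‹Nonempty N›
  set E := fun b : A i => expUtil u i (update σ i (pureStrat b))
  obtain ⟨b, -, hb⟩ := exists_mem_eq_sup' univ_nonempty E
  have hle : expUtil u i σ ≤ E b := by
    rw [expUtil_eq_sum_mul_expUtil_update_pureStrat i, ← hb]
    calc ∑ b', σ i b' * E b' ≤ ∑ b', σ i b' * univ.sup' univ_nonempty E :=
          sum_le_sum fun b' _ => mul_le_mul_of_nonneg_left (le_sup' E (mem_univ b')) (hσ.1 i b')
      _ = univ.sup' univ_nonempty E := by rw [← sum_mul, hσ.2 i, one_mul]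
  exact (sub_nonneg.2 hle).trans (sub_le_nashApr i b)

theorem nashApr_le_one (hu : ∀ i a, u i a ∈ Set.Icc (0 : ℝ) 1) (hσ : IsMixedProfile σ) :
    nashApr σ u ≤ 1 :=
  sup'_le _ _ fun i _ => sup'_le _ _ fun b _ => by
    linarith [(expUtil_mem_Icc (i := i) hu (hσ.update_pureStrat b)).2,
      (expUtil_mem_Icc (i := i) hu hσ).1]

theorem nashApr_sub_nashApr_le (hu : ∀ i a, u i a ∈ Set.Icc (0 : ℝ) 1)
    (hσ : IsMixedProfile σ) (hσ' : IsMixedProfile σ') :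
    nashApr σ u - nashApr σ' u ≤ 2 * dist1 σ σ' := by
  rw [sub_le_iff_le_add]
  refine sup'_le _ _ fun i _ => sup'_le _ _ fun b _ => ?_
  have hdev := (abs_le.1 ((abs_expUtil_sub_le_dist1 (i := i) hu (hσ.update_pureStrat b)
    (hσ'.update_pureStrat b)).trans (dist1_update_le _))).2
  have hbase := (abs_le.1 (abs_expUtil_sub_le_dist1 (i := i) hu hσ hσ')).1
  linarith [sub_le_nashApr (u := u) (σ := σ') i b]

theorem abs_nashApr_sub_nashApr_le (hu : ∀ i a, u i a ∈ Set.Icc (0 : ℝ) 1)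
    (hσ : IsMixedProfile σ) (hσ' : IsMixedProfile σ') :
    |nashApr σ u - nashApr σ' u| ≤ 2 * dist1 σ σ' :=
  abs_sub_le_iff.2 ⟨nashApr_sub_nashApr_le hu hσ hσ',
    dist1_comm (σ := σ) ▸ nashApr_sub_nashApr_le hu hσ' hσ⟩

end NashApproximation

section Hoeffding

variable {ι α : Type*} [Fintype ι] [MeasurableSpace α] (D : Measure α) [IsProbabilityMeasure D]
  {f : α → ℝ} {a b : ℝ}

theorem measureReal_pi_sum_sub_integral_ge_le (hf : AEMeasurable f D)
    (hab : ∀ᵐ x ∂D, f x ∈ Set.Icc a b) {t : ℝ} (ht : 0 ≤ t) :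
    (Measure.pi fun _ : ι => D).real {S | t ≤ ∑ j, (f (S j) - ∫ x, f x ∂D)} ≤
      Real.exp (-2 * t ^ 2 / (Fintype.card ι * (b - a) ^ 2)) := by
  have hsubG (j : ι) : HasSubgaussianMGF (fun S : ι → α => f (S j) - ∫ x, f x ∂D)
      ((‖b - a‖₊ / 2) ^ 2) (Measure.pi fun _ : ι => D) := by
    have heval := measurePreserving_eval (fun _ : ι => D) j
    refine .of_map (X := fun x => f x - ∫ x, f x ∂D) heval.measurable.aemeasurable ?_
    rw [heval.map_eq]
    exact hasSubgaussianMGF_of_mem_Icc hf hab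
  have hindep := iIndepFun_pi (μ := fun _ : ι => D) (X := fun _ x => f x - ∫ x, f x ∂D)
    fun _ => hf.sub_const _
  refine (HasSubgaussianMGF.measure_sum_ge_le_of_iIndepFun hindep (fun j _ => hsubG j)
    ht).trans_eq ?_
  congr 1
  simp [div_pow, field]

theorem measure_pi_abs_sum_sub_integral_ge_le (hf : AEMeasurable f D)
    (hab : ∀ᵐ x ∂D, f x ∈ Set.Icc a b) {t : ℝ} (ht : 0 ≤ t) :
    (Measure.pi fun _ : ι => D) {S | t ≤ |∑ j, (f (S j) - ∫ x, f x ∂D)|} ≤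
      ENNReal.ofReal (2 * Real.exp (-2 * t ^ 2 / (Fintype.card ι * (b - a) ^ 2))) := by
  set μ := Measure.pi fun _ : ι => D
  have hneg : ∀ᵐ x ∂D, -f x ∈ Set.Icc (-b) (-a) := by
    filter_upwards [hab] with x hx using ⟨neg_le_neg hx.2, neg_le_neg hx.1⟩
  have hupper := measureReal_pi_sum_sub_integral_ge_le (ι := ι) D hf hab ht
  have hlower := measureReal_pi_sum_sub_integral_ge_le (ι := ι) D hf.neg hneg ht
  rw [show -a - -b = b - a by ring] at hlower
  have hsplit : {S : ι → α | t ≤ |∑ j, (f (S j) - ∫ x, f x ∂D)|} ⊆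
      {S | t ≤ ∑ j, (f (S j) - ∫ x, f x ∂D)} ∪
        {S | t ≤ ∑ j, (-f (S j) - ∫ x, -f x ∂D)} := by
    intro S hS
    have hsum_neg : ∑ j, (-f (S j) - ∫ x, -f x ∂D) = -∑ j, (f (S j) - ∫ x, f x ∂D) := by
      simp only [integral_neg, ← sum_neg_distrib, neg_sub_neg, neg_sub]
    rcases le_abs'.1 (show t ≤ _ from hS) with h | h
    · right
      simp only [Set.mem_ofPred_eq, hsum_neg]
      linarith
    · exact Or.inl h
  calc μ {S | t ≤ |∑ j, (f (S j) - ∫ x, f x ∂D)|}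
      ≤ μ {S | t ≤ ∑ j, (f (S j) - ∫ x, f x ∂D)}
          + μ {S | t ≤ ∑ j, (-f (S j) - ∫ x, -f x ∂D)} :=
        (measure_mono hsplit).trans (measure_union_le _ _)
    _ ≤ _ := by
      rw [two_mul, ENNReal.ofReal_add (by positivity) (by positivity), ← ofReal_measureReal,
        ← ofReal_measureReal]
      exact add_le_add (ENNReal.ofReal_le_ofReal hupper) (ENNReal.ofReal_le_ofReal hlower)

end Hoeffding

section Risk

variable {N : Type*} {A : N → Type*} [Fintype N] [DecidableEq N] [Nonempty N]
  [∀ i, Fintype (A i)] [∀ i, DecidableEq (A i)] [∀ i, Nonempty (A i)]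
  {h g : NEApprox N A} {r : ℝ}

theorem nashLoss_mem_Icc (h : NEApprox N A) (u : GameUtil N A) : nashLoss h u ∈ Set.Icc 0 1 :=
  ⟨nashApr_nonneg (h.2 u), nashApr_le_one u.2 (h.2 u)⟩

theorem abs_nashLoss_sub_nashLoss_le (hd : ∀ u, dist1 (h.1 u) (g.1 u) ≤ r) (u : GameUtil N A) :
    |nashLoss h u - nashLoss g u| ≤ 2 * r :=
  (abs_nashApr_sub_nashApr_le u.2 (h.2 u) (g.2 u)).trans (by linarith [hd u])

theorem abs_empRisk_sub_empRisk_le {m : ℕ} (S : Fin m → GameUtil N A) (hr : 0 ≤ r)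
    (hc : ∀ u, |nashLoss h u - nashLoss g u| ≤ r) :
    |empRisk S h - empRisk S g| ≤ r := by
  rw [empRisk, empRisk, ← mul_sub, ← sum_sub_distrib, abs_mul, abs_of_nonneg (by positivity)]
  calc 1 / (m : ℝ) * |∑ j, (nashLoss h (S j) - nashLoss g (S j))|
      ≤ 1 / (m : ℝ) * (m * r) := by
        gcongr
        simpa using (abs_sum_le_sum_abs _ _).trans
          (sum_le_card_nsmul univ _ r fun j _ => hc (S j))
    _ ≤ r := by
        rcases eq_or_ne m 0 with rfl | hm
        · simpa using hr
        · field_simp; rfl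

theorem abs_trueRisk_sub_trueRisk_le (D : Measure (GameUtil N A)) [IsProbabilityMeasure D]
    (hh : Integrable (nashLoss h) D) (hg : Integrable (nashLoss g) D)
    (hc : ∀ u, |nashLoss h u - nashLoss g u| ≤ r) :
    |trueRisk D h - trueRisk D g| ≤ r := by
  rw [trueRisk, trueRisk, ← integral_sub hh hg]
  simpa using norm_integral_le_of_norm_le_const (μ := D)
    (f := fun u => nashLoss h u - nashLoss g u) (ae_of_all _ hc)

theorem Covers.exists_abs_empRisk_sub_trueRisk_gt {C : Finset (NEApprox N A)}
    {H : Set (NEApprox N A)} (hcover : Covers r C H) (hr : 0 ≤ r) (D : Measure (GameUtil N A))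
    [IsProbabilityMeasure D] (hCmeas : ∀ g ∈ C, Measurable (nashLoss g)) (hh : h ∈ H)
    (hhmeas : Measurable (nashLoss h)) {m : ℕ} (S : Fin m → GameUtil N A) {ε : ℝ}
    (hdev : ε < |empRisk S h - trueRisk D h|) :
    ∃ g ∈ C, ε - 4 * r < |empRisk S g - trueRisk D g| := by
  obtain ⟨g, hg, hd⟩ := hcover h hh
  have hc := abs_nashLoss_sub_nashLoss_le hd
  have hint {k : NEApprox N A} (hk : Measurable (nashLoss k)) : Integrable (nashLoss k) D :=
    .of_mem_Icc 0 1 hk.aemeasurable (ae_of_all _ (nashLoss_mem_Icc k))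
  have hemp := abs_empRisk_sub_empRisk_le S (by positivity) hc
  have htrue := abs_trueRisk_sub_trueRisk_le D (hint hhmeas) (hint (hCmeas g hg)) hc
  have htri : |empRisk S h - trueRisk D h| ≤ |empRisk S g - trueRisk D g|
      + |empRisk S h - empRisk S g| + |trueRisk D h - trueRisk D g| := by
    rw [abs_sub_comm (trueRisk D h)]
    calc |empRisk S h - trueRisk D h| = |(empRisk S g - trueRisk D g)
          + (empRisk S h - empRisk S g) + (trueRisk D g - trueRisk D h)| := by congr 1; ring
      _ ≤ _ := abs_add_three _ _ _
  exact ⟨g, hg, by linarith⟩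

theorem measure_abs_empRisk_sub_trueRisk_ge_le (D : Measure (GameUtil N A))
    [IsProbabilityMeasure D] (hg : Measurable (nashLoss g)) {m : ℕ} (hm : m ≠ 0) {t : ℝ}
    (ht : 0 ≤ t) :
    (Measure.pi fun _ : Fin m => D) {S | t ≤ |empRisk S g - trueRisk D g|} ≤
      ENNReal.ofReal (2 * Real.exp (-2 * m * t ^ 2)) := by
  have hset : {S : Fin m → GameUtil N A | t ≤ |empRisk S g - trueRisk D g|} =
      {S | m * t ≤ |∑ j, (nashLoss g (S j) - ∫ u, nashLoss g u ∂D)|} := by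
    ext S
    have hmean : empRisk S g - trueRisk D g = (∑ j, (nashLoss g (S j) - trueRisk D g)) / m := by
      simp only [empRisk, sum_sub_distrib, sum_const, card_univ, Fintype.card_fin, nsmul_eq_mul]
      field_simp
    rw [Set.mem_ofPred_eq, Set.mem_ofPred_eq, hmean, abs_div, Nat.abs_cast,
      le_div_iff₀ (by positivity), mul_comm]
    rfl
  rw [hset]
  refine (measure_pi_abs_sum_sub_integral_ge_le D hg.aemeasurable
    (ae_of_all _ (nashLoss_mem_Icc g)) (by positivity)).trans_eq ?_
  congr 2
  simp only [Fintype.card_fin]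
  field_simp
  norm_num

end Risk

theorem uniform_deviation_probability_bound_general
    {N : Type*} [Fintype N] [DecidableEq N] [Nonempty N]
    {A : N → Type*} [∀ i, Fintype (A i)] [∀ i, DecidableEq (A i)] [∀ i, Nonempty (A i)]
    (H : Set (NEApprox N A))
    (hHmeas : ∀ h ∈ H, Measurable (nashLoss h))
    (D : Measure (GameUtil N A)) [IsProbabilityMeasure D]
    {m : ℕ} (hm : 1 ≤ m) (ε : ℝ) (hε : ε ∈ Set.Ioo (0 : ℝ) 1)
    (C : Finset (NEApprox N A)) (K : ℕ) (hK : C.card = K)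
    (hCmeas : ∀ g ∈ C, Measurable (nashLoss g))
    (hcover : Covers (ε / 6) C H) :
    (MeasureTheory.Measure.pi fun _ : Fin m => D)
        {S : Fin m → GameUtil N A | ∃ h ∈ H, |empRisk S h - trueRisk D h| > ε} ≤
      ENNReal.ofReal (2 * K * Real.exp (-(2 * m * ε ^ 2) / 9)) := by
  obtain ⟨hε₀, -⟩ := hε
  set μ := Measure.pi fun _ : Fin m => D
  set bad : NEApprox N A → Set (Fin m → GameUtil N A) :=
    fun g => {S | ε / 3 ≤ |empRisk S g - trueRisk D g|}
  have hincl : {S | ∃ h ∈ H, |empRisk S h - trueRisk D h| > ε} ⊆ ⋃ g ∈ C, bad g := by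
    rintro S ⟨h, hh, hdev⟩
    obtain ⟨g, hg, hgdev⟩ := hcover.exists_abs_empRisk_sub_trueRisk_gt (by positivity) D hCmeas
      hh (hHmeas h hh) S hdev
    exact Set.mem_biUnion hg (show ε / 3 ≤ _ by linarith)
  have hbad (g) (hg : g ∈ C) :
      μ (bad g) ≤ ENNReal.ofReal (2 * Real.exp (-(2 * m * ε ^ 2) / 9)) :=
    (measure_abs_empRisk_sub_trueRisk_ge_le D (hCmeas g hg) (by omega) (by positivity)).trans_eq
      (by ring_nf)
  calc μ {S | ∃ h ∈ H, |empRisk S h - trueRisk D h| > ε}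
      ≤ ∑ g ∈ C, μ (bad g) := (measure_mono hincl).trans (measure_biUnion_finset_le C bad)
    _ ≤ ∑ _g ∈ C, ENNReal.ofReal (2 * Real.exp (-(2 * m * ε ^ 2) / 9)) := sum_le_sum hbad
    _ = ENNReal.ofReal (2 * K * Real.exp (-(2 * m * ε ^ 2) / 9)) := by
      rw [sum_const, hK, nsmul_eq_mul, ← ENNReal.ofReal_natCast,
        ← ENNReal.ofReal_mul (by positivity)]
      ring_nf

theorem uniform_deviation_probability_bound
    {N : Type*} [Fintype N] [DecidableEq N] [Nonempty N]
    {A : N → Type*} [∀ i, Fintype (A i)] [∀ i, DecidableEq (A i)] [∀ i, Nonempty (A i)]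
    (H : Set (NEApprox N A)) (hH : H.Nonempty)
    (hHmeas : ∀ h ∈ H, Measurable (nashLoss h))
    (D : Measure (GameUtil N A)) [IsProbabilityMeasure D]
    {m : ℕ} (hm : 1 ≤ m) (ε : ℝ) (hε : ε ∈ Set.Ioo (0 : ℝ) 1)
    (C : Finset (NEApprox N A)) (hC : C.Nonempty) (K : ℕ) (hK : C.card = K)
    (hCmeas : ∀ g ∈ C, Measurable (nashLoss g))
    (hcover : Covers (ε / 6) C H)
    (hsetmeas : MeasurableSet
      {S : Fin m → GameUtil N A | ∃ h ∈ H, |empRisk S h - trueRisk D h| > ε}) :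
    (MeasureTheory.Measure.pi fun _ : Fin m => D)
        {S : Fin m → GameUtil N A | ∃ h ∈ H, |empRisk S h - trueRisk D h| > ε} ≤
      ENNReal.ofReal (2 * K * Real.exp (-(2 * m * ε ^ 2) / 9)) :=
  uniform_deviation_probability_bound_general H hHmeas D hm ε hε C K hK hCmeas hcover
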